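/- arXiv:2506.17995 — 5 statements merged into one kernel-verified Lean document; each statement's English description precedes it below -/
import Mathlib

section
/- The map T on the closed unit ball B of C([-1,1]) defined by (Tf)(t) = min(1, max(-1, f(t) + 2t)) is a well-defined nonexpansive map from B to B with no fixed point. -/
/-- `T f (t) = min 1 (max (-1) (f t + 2 t))` as a continuous map on `[-1,1]`. -/
noncomputable def T1 (f : C(Set.Icc (-1:ℝ) 1, ℝ)) : C(Set.Icc (-1:ℝ) 1, ℝ) :=
  ⟨fun t => min 1 (max (-1) (f t + 2 * (t : ℝ))), by fun_prop⟩

lemma fix_val (f : C(Set.Icc (-1:ℝ) 1, ℝ)) (h : T1 f = f) (t : Set.Icc (-1:ℝ) 1) :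
    min 1 (max (-1) (f t + 2 * (t : ℝ))) = f t := by
  exact ContinuousMap.congr_fun h t

lemma fix_pos (f : C(Set.Icc (-1:ℝ) 1, ℝ)) (h : T1 f = f) (t : Set.Icc (-1:ℝ) 1)
    (ht : 0 < (t : ℝ)) : f t = 1 := by
  have e := fix_val f h t
  rcases le_total (f t + 2 * (t : ℝ)) (-1) with h1 | h1
  · rw [max_eq_left h1, min_eq_right (by linarith : (-1:ℝ) ≤ 1)] at e
    linarith
  · rw [max_eq_right h1] at e
    rcases le_total 1 (f t + 2 * (t : ℝ)) with h2 | h2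
    · rw [min_eq_left h2] at e; exact e.symm
    · rw [min_eq_right h2] at e; linarith

lemma fix_neg (f : C(Set.Icc (-1:ℝ) 1, ℝ)) (h : T1 f = f) (t : Set.Icc (-1:ℝ) 1)
    (ht : (t : ℝ) < 0) : f t = -1 := by
  have e := fix_val f h t
  rcases le_total (f t + 2 * (t : ℝ)) (-1) with h1 | h1
  · rw [max_eq_left h1, min_eq_right (by linarith : (-1:ℝ) ≤ 1)] at e
    exact e.symm
  · rw [max_eq_right h1] at e
    rcases le_total 1 (f t + 2 * (t : ℝ)) with h2 | h2
    · rw [min_eq_left h2] at e; linarith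
    · rw [min_eq_right h2] at e; linarith

/-- The map `T` on the closed unit ball `B` of `C([-1,1])` defined by
`(Tf)(t) = min(1, max(-1, f(t) + 2t))` is a well-defined nonexpansive map from `B` to `B`
with no fixed point. -/
theorem stmt1 :
    (∀ f : C(Set.Icc (-1:ℝ) 1, ℝ), ‖f‖ ≤ 1 → ‖T1 f‖ ≤ 1) ∧
    (∀ f g : C(Set.Icc (-1:ℝ) 1, ℝ), ‖f‖ ≤ 1 → ‖g‖ ≤ 1 → ‖T1 f - T1 g‖ ≤ ‖f - g‖) ∧
    (∀ f : C(Set.Icc (-1:ℝ) 1, ℝ), ‖f‖ ≤ 1 → T1 f ≠ f) := by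
  refine ⟨?_, ?_, ?_⟩
  · intro f hf
    rw [ContinuousMap.norm_le _ zero_le_one]
    intro t
    rw [show (T1 f) t = min 1 (max (-1) (f t + 2 * (t:ℝ))) from rfl, Real.norm_eq_abs, abs_le]
    constructor
    · exact le_min (by norm_num) (le_max_left _ _)
    · exact min_le_left _ _
  · intro f g hf hg
    rw [ContinuousMap.norm_le _ (norm_nonneg _)]
    intro t
    rw [show (T1 f - T1 g) t = min 1 (max (-1) (f t + 2 * (t:ℝ))) - min 1 (max (-1) (g t + 2 * (t:ℝ))) from rfl, Real.norm_eq_abs]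
    have key : |min 1 (max (-1) (f t + 2 * (t:ℝ))) - min 1 (max (-1) (g t + 2 * (t:ℝ)))|
        ≤ |f t - g t| := by
      calc |min 1 (max (-1) (f t + 2 * (t:ℝ))) - min 1 (max (-1) (g t + 2 * (t:ℝ)))|
          ≤ max |(1:ℝ) - 1| |max (-1) (f t + 2 * (t:ℝ)) - max (-1) (g t + 2 * (t:ℝ))| :=
            abs_min_sub_min_le_max _ _ _ _
        _ ≤ |f t - g t| := by
            rw [max_comm (-1:ℝ) (f t + 2 * (t:ℝ)), max_comm (-1:ℝ) (g t + 2 * (t:ℝ))]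
            refine max_le (by simp [abs_nonneg]) ?_
            calc |max (f t + 2*(t:ℝ)) (-1) - max (g t + 2*(t:ℝ)) (-1)|
                ≤ |(f t + 2*(t:ℝ)) - (g t + 2*(t:ℝ))| := abs_max_sub_max_le_abs _ _ _
              _ = |f t - g t| := by ring_nf
    refine key.trans ?_
    have := ContinuousMap.norm_coe_le_norm (f - g) t
    simpa using this
  · intro f hf h
    -- f is 1 on positives, -1 on negatives; contradiction with continuity at 0
    have h0 : (0:ℝ) ∈ Set.Icc (-1:ℝ) 1 := by norm_num
    have hu : ∀ n : ℕ, (1 / (n + 2) : ℝ) ∈ Set.Icc (-1:ℝ) 1 := by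
      intro n
      have hp : (0:ℝ) < 1 / (n + 2) := by positivity
      constructor
      · linarith
      · rw [div_le_one (by positivity)]; linarith [Nat.cast_nonneg (α := ℝ) n]
    have hv : ∀ n : ℕ, (-(1 / (n + 2)) : ℝ) ∈ Set.Icc (-1:ℝ) 1 := by
      intro n
      have := hu n
      constructor <;> [linarith [this.2]; linarith [this.1]]
    have hlim : Filter.Tendsto (fun n : ℕ => (1 / (n + 2) : ℝ)) Filter.atTop (nhds 0) := by
      have hd : Filter.Tendsto (fun n : ℕ => ((n:ℝ) + 2)) Filter.atTop Filter.atTop :=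
        Filter.tendsto_atTop_add_const_right _ 2 tendsto_natCast_atTop_atTop
      simpa [one_div, Pi.inv_def] using hd.inv_tendsto_atTop
    have hP : Filter.Tendsto (fun n : ℕ => (⟨1 / (n + 2), hu n⟩ : Set.Icc (-1:ℝ) 1))
        Filter.atTop (nhds ⟨0, h0⟩) := by
      rw [tendsto_subtype_rng]
      exact hlim
    have hN : Filter.Tendsto (fun n : ℕ => (⟨-(1 / (n + 2)), hv n⟩ : Set.Icc (-1:ℝ) 1))
        Filter.atTop (nhds ⟨0, h0⟩) := by
      rw [tendsto_subtype_rng]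
      simpa using hlim.neg
    have c1 : Filter.Tendsto (fun n : ℕ => f ⟨1 / (n + 2), hu n⟩) Filter.atTop
        (nhds (f ⟨0, h0⟩)) := (f.continuous.tendsto _).comp hP
    have c2 : Filter.Tendsto (fun n : ℕ => f ⟨-(1 / (n + 2)), hv n⟩) Filter.atTop
        (nhds (f ⟨0, h0⟩)) := (f.continuous.tendsto _).comp hN
    have e1 : ∀ n : ℕ, f ⟨1 / (n + 2), hu n⟩ = 1 := fun n =>
      fix_pos f h _ (by show (0:ℝ) < 1 / (n + 2); positivity)
    have e2 : ∀ n : ℕ, f ⟨-(1 / (n + 2)), hv n⟩ = -1 := fun n =>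
      fix_neg f h _ (by
        show (-(1 / ((n:ℝ) + 2))) < 0
        have : (0:ℝ) < 1 / ((n:ℝ) + 2) := by positivity
        linarith)
    have l1 : f ⟨0, h0⟩ = 1 :=
      tendsto_nhds_unique (c1.congr e1) tendsto_const_nhds
    have l2 : f ⟨0, h0⟩ = -1 :=
      tendsto_nhds_unique (c2.congr e2) tendsto_const_nhds
    linarith [l1, l2]
end

section
/- If K is a compact Hausdorff space containing a nontrivial convergent sequence (x_n) with limit x not in the set {x_n : n ∈ ℕ}, then there exists g ∈ C(K) such that no continuous f: K → [-1,1] satisfies g·f = |g|. -/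
open Filter

/-- Any subset of `{p} ∪ range y` containing `p`, where `y → p`, is closed in a T2 space. -/
lemma aux_closed {K : Type*} [TopologicalSpace K] [T2Space K] (y : ℕ → K) (p : K)
    (hy : Tendsto y atTop (nhds p)) (A : Set K) (hA : A ⊆ insert p (Set.range y))
    (hpA : p ∈ A) : IsClosed A := by
  rw [← isOpen_compl_iff, isOpen_iff_mem_nhds]
  intro q hq
  have hqp : q ≠ p := fun h => hq (h ▸ hpA)
  obtain ⟨U, V, hU, hV, hqU, hpV, hUV⟩ := t2_separation hqp
  have hev : ∀ᶠ n in atTop, y n ∈ V := hy (hV.mem_nhds hpV)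
  obtain ⟨N, hN⟩ := eventually_atTop.1 hev
  have hfin : (A ∩ y '' Set.Iio N).Finite :=
    Set.Finite.inter_of_right ((Set.finite_Iio N).image y) A
  have hWopen : IsOpen (U \ (A ∩ y '' Set.Iio N)) := hU.sdiff hfin.isClosed
  refine mem_nhds_iff.2 ⟨U \ (A ∩ y '' Set.Iio N), ?_, hWopen, ⟨hqU, fun h => hq h.1⟩⟩
  rintro a ⟨haU, haI⟩ haA
  have haS := hA haA
  have hanp : a ≠ p := by
    rintro rfl
    exact (Set.disjoint_iff.1 hUV ⟨haU, hpV⟩)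
  rcases haS with h | ⟨n, rfl⟩
  · exact hanp h
  · rcases lt_or_ge n N with h | h
    · exact haI ⟨haA, ⟨n, h, rfl⟩⟩
    · exact (Set.disjoint_iff.1 hUV ⟨haU, hN n h⟩)

/-- If a compact Hausdorff space `K` contains a nontrivial convergent sequence `(xₙ)` with
limit `p` not in `{xₙ : n ∈ ℕ}`, then there exists `g ∈ C(K)` such that no continuous
`f : K → [-1,1]` satisfies `g·f = |g|`. -/
theorem stmt5 {K : Type*} [TopologicalSpace K] [CompactSpace K] [T2Space K]
    (x : ℕ → K) (p : K) (hconv : Tendsto x atTop (nhds p)) (hp : p ∉ Set.range x) :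
    ∃ g : C(K, ℝ), ∀ f : C(K, ℝ), (∀ t, f t ∈ Set.Icc (-1:ℝ) 1) →
      ¬ (∀ t, g t * f t = |g t|) := by
  classical
  -- Step 1: extract an injective subsequence
  have key : ∀ (s : Finset ℕ) (N : ℕ), ∃ n, N ≤ n ∧ x n ∉ s.image x := by
    intro s N
    have hcl : IsClosed ((s.image x : Finset K) : Set K) := Set.Finite.isClosed (s.image x).finite_toSet
    have hpmem : p ∈ ((s.image x : Finset K) : Set K)ᶜ := by
      intro h
      simp only [Finset.coe_image, Set.mem_image, Finset.mem_coe] at h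
      obtain ⟨n, _, hn⟩ := h
      exact hp ⟨n, hn⟩
    have h1 : ∀ᶠ n in atTop, x n ∈ ((s.image x : Finset K) : Set K)ᶜ :=
      hconv (hcl.isOpen_compl.mem_nhds hpmem)
    have h2 : ∀ᶠ n in atTop, N ≤ n := eventually_ge_atTop N
    obtain ⟨n, hn1, hn2⟩ := (h2.and h1).exists
    exact ⟨n, hn1, by simpa using hn2⟩
  choose c hc1 hc2 using key
  set A : ℕ → ℕ × Finset ℕ := fun k => Nat.rec (c ∅ 0, {c ∅ 0})
    (fun _ ih => (c ih.2 (ih.1 + 1), insert (c ih.2 (ih.1 + 1)) ih.2)) k with hA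
  set φ : ℕ → ℕ := fun k => (A k).1 with hφdef
  have hAsucc : ∀ k, A (k + 1) = (c (A k).2 ((A k).1 + 1), insert (c (A k).2 ((A k).1 + 1)) (A k).2) := fun k => rfl
  have hmem_self : ∀ k, φ k ∈ (A k).2 := by
    intro k
    cases k with
    | zero => simp [hA, hφdef]
    | succ m => rw [hφdef, hAsucc m]; exact Finset.mem_insert_self _ _
  have hsub : ∀ k, (A k).2 ⊆ (A (k + 1)).2 := by
    intro k
    rw [hAsucc k]
    exact Finset.subset_insert _ _
  have hmem : ∀ j k, j ≤ k → φ j ∈ (A k).2 := by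
    intro j k hjk
    induction k with
    | zero => rw [Nat.le_zero.1 hjk]; exact hmem_self 0
    | succ m ih =>
      rcases Nat.lt_succ_iff_lt_or_eq.mp (Nat.lt_succ_of_le hjk) with h | h
      · exact hsub m (ih (Nat.lt_succ_iff.mp h))
      · rw [h]; exact hmem_self (m + 1)
  have hmono : StrictMono φ := by
    apply strictMono_nat_of_lt_succ
    intro k
    have h1 := hc1 (A k).2 ((A k).1 + 1)
    have h2 : (A (k + 1)).1 = c (A k).2 ((A k).1 + 1) := by rw [hAsucc k]
    show (A k).1 < (A (k + 1)).1
    rw [h2]; omega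
  have hninj : ∀ j k, j < k → x (φ j) ≠ x (φ k) := by
    intro j k hjk
    obtain ⟨m, rfl⟩ : ∃ m, k = m + 1 := ⟨k - 1, by omega⟩
    have hjm : j ≤ m := by omega
    have h2 : (A (m + 1)).1 = c (A m).2 ((A m).1 + 1) := by rw [hAsucc m]
    have hnot : x (φ (m + 1)) ∉ (A m).2.image x := by
      show x (A (m + 1)).1 ∉ _
      rw [h2]; exact hc2 _ _
    intro heq
    exact hnot (heq ▸ Finset.mem_image_of_mem x (hmem j m hjm))
  have hinj : Function.Injective (x ∘ φ) := by
    intro a b hab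
    by_contra h
    rcases lt_or_gt_of_ne h with h' | h'
    · exact hninj a b h' hab
    · exact hninj b a h' hab.symm
  -- Step 2: the sequence y
  set y : ℕ → K := x ∘ φ with hydef
  have hytend : Tendsto y atTop (nhds p) := hconv.comp hmono.tendsto_atTop
  have hyinj : Function.Injective y := hinj
  have hynp : ∀ k, y k ≠ p := fun k h => hp ⟨φ k, h⟩
  set S : Set K := insert p (Set.range y) with hSdef
  have hScl : IsClosed S := aux_closed y p hytend S (subset_refl _) (Set.mem_insert _ _)
  -- the target function on S
  set val : ℕ → ℝ := fun k => (-1) ^ k / (k + 1) with hvaldef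
  have hvalne : ∀ k, val k ≠ 0 := by
    intro k
    rw [hvaldef]
    apply div_ne_zero
    · positivity
    · positivity
  have hvalabs : ∀ k, |val k| = 1 / (k + 1 : ℝ) := by
    intro k
    rw [hvaldef, abs_div, abs_pow, abs_neg, abs_one, one_pow, abs_of_pos (by positivity)]
  set cfun : K → ℝ := fun t => if h : ∃ k, y k = t then val h.choose else 0 with hcfun
  have hcy : ∀ k, cfun (y k) = val k := by
    intro k
    have h : ∃ j, y j = y k := ⟨k, rfl⟩
    have : h.choose = k := hyinj h.choose_spec
    simp only [hcfun, dif_pos h, this]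
  have hcp : cfun p = 0 := by
    have h : ¬ ∃ k, y k = p := fun ⟨k, hk⟩ => hynp k hk
    simp only [hcfun, dif_neg h]
  -- continuity on S
  have hcont : ContinuousOn cfun S := by
    intro t ht
    rcases ht with h | ⟨k, rfl⟩
    · -- at p
      rw [show t = p from h]
      rw [ContinuousWithinAt, hcp, Metric.tendsto_nhds]
      intro ε hε
      obtain ⟨N, hN⟩ := exists_nat_one_div_lt hε
      have hTcl : IsClosed (y '' Set.Iio N) := ((Set.finite_Iio N).image y).isClosed
      have hpT : p ∉ y '' Set.Iio N := by
        rintro ⟨j, _, hj⟩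
        exact hynp j hj
      have hmem1 : (y '' Set.Iio N)ᶜ ∈ nhdsWithin p S :=
        nhdsWithin_le_nhds (hTcl.isOpen_compl.mem_nhds hpT)
      filter_upwards [hmem1, self_mem_nhdsWithin] with q hq1 hq2
      rcases hq2 with rfl | ⟨j, rfl⟩
      · simpa [hcp] using hε
      · have hjN : N ≤ j := by
          by_contra h
          exact hq1 ⟨j, Set.mem_Iio.2 (by omega), rfl⟩
        rw [hcy j, Real.dist_eq, sub_zero, hvalabs j]
        calc (1 : ℝ) / (j + 1) ≤ 1 / (N + 1) := by
              apply one_div_le_one_div_of_le <;> [positivity; exact_mod_cast by omega]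
          _ < ε := hN
    · -- at y k : isolated point
      have hBcl : IsClosed (S \ {y k}) := by
        apply aux_closed y p hytend
        · exact Set.diff_subset.trans (subset_refl S)
        · exact ⟨Set.mem_insert _ _, fun h => hynp k (Set.mem_singleton_iff.1 h).symm⟩
      have hsingleton : {y k} ∈ nhdsWithin (y k) S := by
        rw [mem_nhdsWithin]
        refine ⟨(S \ {y k})ᶜ, hBcl.isOpen_compl, fun h => h.2 rfl, ?_⟩
        rintro a ⟨ha1, ha2⟩
        by_contra h
        exact ha1 ⟨ha2, h⟩
      have hle : nhdsWithin (y k) S ≤ pure (y k) := le_pure_iff.2 hsingleton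
      exact (tendsto_pure_nhds cfun (y k)).mono_left hle
  -- Tietze extension
  obtain ⟨g, hg⟩ := ContinuousMap.exists_restrict_eq (Y := ℝ) hScl ⟨S.restrict cfun, hcont.restrict⟩
  have hgS : ∀ t (ht : t ∈ S), g t = cfun t := by
    intro t ht
    have := congrFun (congrArg DFunLike.coe hg) ⟨t, ht⟩
    exact this
  refine ⟨g, ?_⟩
  intro f hf hfg
  have hfy : ∀ k, f (y k) = (-1) ^ k := by
    intro k
    have hgy : g (y k) = val k := by
      rw [hgS (y k) (Set.mem_insert_of_mem _ ⟨k, rfl⟩), hcy]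
    have heq := hfg (y k)
    rw [hgy, hvalabs k] at heq
    have hsq : (-1 : ℝ) ^ (k + k) = 1 := Even.neg_one_pow ⟨k, rfl⟩
    have : val k * f (y k) = val k * (-1) ^ k := by
      rw [heq, hvaldef, div_mul_eq_mul_div, ← pow_add, hsq]
    exact mul_left_cancel₀ (hvalne k) this
  have h2k : Tendsto (fun k : ℕ => 2 * k) atTop atTop :=
    tendsto_atTop_mono (fun n => by simp only [id_eq]; omega) tendsto_id
  have h2k1 : Tendsto (fun k : ℕ => 2 * k + 1) atTop atTop :=
    tendsto_atTop_mono (fun n => by simp only [id_eq]; omega) tendsto_id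
  have heven : Tendsto (fun k => f (y (2 * k))) atTop (nhds (f p)) :=
    (f.continuous.tendsto p).comp (hytend.comp h2k)
  have hodd : Tendsto (fun k => f (y (2 * k + 1))) atTop (nhds (f p)) :=
    (f.continuous.tendsto p).comp (hytend.comp h2k1)
  have h1 : f p = 1 := by
    have : Tendsto (fun _ : ℕ => (1 : ℝ)) atTop (nhds (f p)) := by
      apply heven.congr
      intro k
      rw [hfy (2 * k), pow_mul]
      norm_num
    exact tendsto_nhds_unique this tendsto_const_nhds
  have h2 : f p = -1 := by
    have : Tendsto (fun _ : ℕ => (-1 : ℝ)) atTop (nhds (f p)) := by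
      apply hodd.congr
      intro k
      rw [hfy (2 * k + 1), pow_succ, pow_mul]
      norm_num
    exact tendsto_nhds_unique this tendsto_const_nhds
  rw [h1] at h2
  norm_num at h2
end

section
/- Suppose E: X → Y and R: Y → X are linear operators between Banach spaces with ‖E‖ ≤ 1, ‖R‖ ≤ 1, and E ∘ R = Id_Y. If every nonexpansive self-map of the closed unit ball of X has a fixed point, then every nonexpansive self-map of the closed unit ball of Y has a fixed point. -/
/-- If `E : X → Y` and `R : Y → X` are norm-one-bounded linear operators between Banach
spaces with `E ∘ R = Id_Y`, and every nonexpansive self-map of the closed unit ball of `X`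
has a fixed point, then every nonexpansive self-map of the closed unit ball of `Y` has a
fixed point. -/
theorem stmt14 {X Y : Type*} [NormedAddCommGroup X] [NormedSpace ℝ X] [CompleteSpace X]
    [NormedAddCommGroup Y] [NormedSpace ℝ Y] [CompleteSpace Y]
    (E : X →L[ℝ] Y) (R : Y →L[ℝ] X) (hE : ‖E‖ ≤ 1) (hR : ‖R‖ ≤ 1)
    (hER : ∀ y, E (R y) = y)
    (hX : ∀ T : Metric.closedBall (0:X) 1 → Metric.closedBall (0:X) 1,
      (∀ a b : Metric.closedBall (0:X) 1, ‖(T a : X) - (T b : X)‖ ≤ ‖(a : X) - (b : X)‖) →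
      ∃ a, T a = a) :
    ∀ T : Metric.closedBall (0:Y) 1 → Metric.closedBall (0:Y) 1,
      (∀ a b : Metric.closedBall (0:Y) 1, ‖(T a : Y) - (T b : Y)‖ ≤ ‖(a : Y) - (b : Y)‖) →
      ∃ a, T a = a := by
  intro T hT
  have hEball : ∀ x : X, x ∈ Metric.closedBall (0:X) 1 → E x ∈ Metric.closedBall (0:Y) 1 := by
    intro x hx
    simp only [Metric.mem_closedBall, dist_zero_right] at *
    calc ‖E x‖ ≤ ‖E‖ * ‖x‖ := E.le_opNorm x
    _ ≤ 1 * 1 := mul_le_mul hE hx (norm_nonneg x) zero_le_one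
    _ = 1 := one_mul 1
  have hRball : ∀ y : Y, y ∈ Metric.closedBall (0:Y) 1 → R y ∈ Metric.closedBall (0:X) 1 := by
    intro y hy
    simp only [Metric.mem_closedBall, dist_zero_right] at *
    calc ‖R y‖ ≤ ‖R‖ * ‖y‖ := R.le_opNorm y
    _ ≤ 1 * 1 := mul_le_mul hR hy (norm_nonneg y) zero_le_one
    _ = 1 := one_mul 1
  -- define S x = R (T (E x))
  set S : Metric.closedBall (0:X) 1 → Metric.closedBall (0:X) 1 :=
    fun x => ⟨R (T ⟨E x, hEball x x.2⟩), hRball _ (T _).2⟩ with hS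
  have hSne : ∀ a b : Metric.closedBall (0:X) 1,
      ‖(S a : X) - (S b : X)‖ ≤ ‖(a : X) - (b : X)‖ := by
    intro a b
    have h1 : (S a : X) - (S b : X) = R ((T ⟨E a, hEball a a.2⟩ : Y) - (T ⟨E b, hEball b b.2⟩ : Y)) := by
      simp [hS, map_sub]
    rw [h1]
    calc ‖R ((T ⟨E a, hEball a a.2⟩ : Y) - (T ⟨E b, hEball b b.2⟩ : Y))‖
        ≤ ‖R‖ * ‖(T ⟨E a, hEball a a.2⟩ : Y) - (T ⟨E b, hEball b b.2⟩ : Y)‖ := R.le_opNorm _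
      _ ≤ 1 * ‖(T ⟨E a, hEball a a.2⟩ : Y) - (T ⟨E b, hEball b b.2⟩ : Y)‖ :=
          mul_le_mul_of_nonneg_right hR (norm_nonneg _)
      _ = ‖(T ⟨E a, hEball a a.2⟩ : Y) - (T ⟨E b, hEball b b.2⟩ : Y)‖ := one_mul _
      _ ≤ ‖E (a : X) - E (b : X)‖ := hT _ _
      _ = ‖E ((a : X) - (b : X))‖ := by rw [map_sub]
      _ ≤ ‖E‖ * ‖(a : X) - (b : X)‖ := E.le_opNorm _
      _ ≤ 1 * ‖(a : X) - (b : X)‖ := mul_le_mul_of_nonneg_right hE (norm_nonneg _)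
      _ = ‖(a : X) - (b : X)‖ := one_mul _
  obtain ⟨a, ha⟩ := hX S hSne
  refine ⟨⟨E a, hEball a a.2⟩, ?_⟩
  have ha' : R (T ⟨E a, hEball a a.2⟩) = (a : X) := congrArg Subtype.val ha
  have key : (T ⟨E a, hEball a a.2⟩ : Y) = E (a : X) := by
    conv_lhs => rw [← hER (T ⟨E a, hEball a a.2⟩ : Y)]
    rw [ha']
  exact Subtype.ext key
end

section
/- Let K be a compact Hausdorff space and p ∈ K a non-P-point, i.e., there exists g ∈ C(K) with g(p) = 0, 0 ≤ g ≤ 1, and g not identically zero on any open neighborhood of p. Then the map Tf = (1-g)·f + g is a nonexpansive self-map of the closed unit ball of C(K,p) = {f ∈ C(K) : f(p) = 0} with no fixed point. -/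
/-- If `p` is a non-`P`-point of a compact Hausdorff space `K`, witnessed by `g ∈ C(K)` with
`g(p) = 0`, `0 ≤ g ≤ 1` and `g` not identically zero on any open neighborhood of `p`, then
`T f = (1-g)·f + g` is a nonexpansive self-map of the closed unit ball of
`C(K,p) = {f ∈ C(K) : f(p) = 0}` with no fixed point. -/
theorem stmt17 {K : Type*} [TopologicalSpace K] [CompactSpace K] [T2Space K]
    (p : K) (g : C(K, ℝ)) (hg0 : g p = 0) (hg1 : ∀ x, g x ∈ Set.Icc (0:ℝ) 1)
    (hgp : ∀ U : Set K, IsOpen U → p ∈ U → ∃ x ∈ U, g x ≠ 0) :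
    (∀ f : C(K, ℝ), f p = 0 → ‖f‖ ≤ 1 →
      ((1 - g) * f + g) p = 0 ∧ ‖(1 - g) * f + g‖ ≤ 1) ∧
    (∀ f f' : C(K, ℝ), ‖((1 - g) * f + g) - ((1 - g) * f' + g)‖ ≤ ‖f - f'‖) ∧
    ¬ ∃ f : C(K, ℝ), f p = 0 ∧ ‖f‖ ≤ 1 ∧ (1 - g) * f + g = f := by
  refine ⟨?_, ?_, ?_⟩
  · intro f hfp hf1
    constructor
    · simp [hg0, hfp]
    · rw [ContinuousMap.norm_le _ zero_le_one]
      intro x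
      have h1 := (hg1 x).1
      have h2 := (hg1 x).2
      have hfx : |f x| ≤ 1 := by
        calc |f x| = ‖f x‖ := rfl
          _ ≤ ‖f‖ := f.norm_coe_le_norm x
          _ ≤ 1 := hf1
      simp only [ContinuousMap.add_apply, ContinuousMap.mul_apply,
        ContinuousMap.sub_apply, ContinuousMap.one_apply, Real.norm_eq_abs]
      calc |(1 - g x) * f x + g x| ≤ |(1 - g x) * f x| + |g x| := abs_add_le _ _
        _ = (1 - g x) * |f x| + g x := by
            rw [abs_mul, abs_of_nonneg (by linarith), abs_of_nonneg h1]
        _ ≤ (1 - g x) * 1 + g x := by nlinarith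
        _ = 1 := by ring
  · intro f f'
    have hn : (0:ℝ) ≤ ‖f - f'‖ := norm_nonneg _
    rw [ContinuousMap.norm_le _ hn]
    intro x
    have h1 := (hg1 x).1
    have h2 := (hg1 x).2
    have hfx : |f x - f' x| ≤ ‖f - f'‖ := by
      calc |f x - f' x| = ‖(f - f') x‖ := by simp
        _ ≤ ‖f - f'‖ := (f - f').norm_coe_le_norm x
    simp only [ContinuousMap.sub_apply, ContinuousMap.add_apply, ContinuousMap.mul_apply,
      ContinuousMap.one_apply, Real.norm_eq_abs]
    have : (1 - g x) * f x + g x - ((1 - g x) * f' x + g x) = (1 - g x) * (f x - f' x) := by ring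
    rw [this, abs_mul, abs_of_nonneg (by linarith)]
    nlinarith [abs_nonneg (f x - f' x)]
  · rintro ⟨f, hfp, hf1, hfix⟩
    have key : ∀ x, g x * (1 - f x) = 0 := by
      intro x
      have := congrFun (congrArg (fun h : C(K,ℝ) => (h : K → ℝ)) hfix) x
      simp only [ContinuousMap.add_apply, ContinuousMap.mul_apply, ContinuousMap.sub_apply,
        ContinuousMap.one_apply] at this
      nlinarith [this]
    set U : Set K := f ⁻¹' (Set.Iio 1) with hU
    have hUopen : IsOpen U := isOpen_Iio.preimage f.continuous
    have hpU : p ∈ U := by simp [hU, hfp]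
    obtain ⟨x, hxU, hgx⟩ := hgp U hUopen hpU
    have hfx : f x < 1 := hxU
    have := key x
    have : g x = 0 := by
      rcases mul_eq_zero.1 this with h | h
      · exact h
      · linarith
    exact hgx this
end

section
/- Every infinite compact Hausdorff space K admits a continuous function f: K → ℝ taking infinitely many values; consequently K contains a non-P-point (a point at which some continuous function is not locally constant). -/
open Set

/-- Every infinite compact Hausdorff space `K` admits a continuous real-valued function
taking infinitely many values; consequently `K` contains a non-`P`-point, i.e. a point at
which some continuous function is not locally constant. -/
theorem stmt18 {K : Type*} [TopologicalSpace K] [CompactSpace K] [T2Space K] [Infinite K] :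
    (∃ f : C(K, ℝ), (Set.range f).Infinite) ∧
    ∃ p : K, ∃ g : C(K, ℝ), ∀ U : Set K, IsOpen U → p ∈ U → ∃ x ∈ U, g x ≠ g p := by
  -- Step 1: from any infinite set we can extract a point, an open nbhd, leaving an infinite rest
  have lemA : ∀ S : Set K, S.Infinite →
      ∃ x U, x ∈ S ∧ IsOpen U ∧ x ∈ U ∧ (S \ U).Infinite := by
    intro S hS
    obtain ⟨x, hxS, y, hyS, hxy⟩ := hS.nontrivial
    obtain ⟨U, V, hU, hV, hxU, hyV, hUV⟩ := t2_separation hxy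
    by_cases h : (S \ U).Infinite
    · exact ⟨x, U, hxS, hU, hxU, h⟩
    · refine ⟨y, V, hyS, hV, hyV, ?_⟩
      have h1 : (S \ (S \ U)).Infinite := hS.diff (Set.not_infinite.mp h)
      refine h1.mono ?_
      intro z hz
      simp only [Set.mem_diff, Set.mem_diff, not_and, not_not] at hz ⊢
      refine ⟨hz.1, fun hzV => ?_⟩
      exact (Set.disjoint_left.mp hUV) (hz.2 hz.1) hzV
  choose pt nb hmem hopen hpt hrem using lemA
  -- Step 2: recursively construct points with "forward separation"
  let Sf : ℕ → {s : Set K // s.Infinite} := fun n =>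
    Nat.rec ⟨Set.univ, Set.infinite_univ⟩
      (fun _ p => ⟨p.1 \ nb p.1 p.2, hrem p.1 p.2⟩) n
  let xn : ℕ → K := fun n => pt (Sf n).1 (Sf n).2
  let Un : ℕ → Set K := fun n => nb (Sf n).1 (Sf n).2
  have hSfsucc : ∀ n, (Sf (n + 1)).1 = (Sf n).1 \ Un n := fun n => rfl
  have hxnS : ∀ n, xn n ∈ (Sf n).1 := fun n => hmem _ _
  have hxnU : ∀ n, xn n ∈ Un n := fun n => hpt _ _
  have hUopen : ∀ n, IsOpen (Un n) := fun n => hopen _ _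
  have hmono : ∀ n m, n ≤ m → (Sf m).1 ⊆ (Sf n).1 := by
    intro n m h
    induction m with
    | zero => simp_all
    | succ k ih =>
      rcases Nat.lt_or_ge n (k + 1) with h' | h'
      · have := ih (Nat.lt_succ_iff.mp h')
        rw [hSfsucc k]
        exact (Set.diff_subset).trans this
      · have : n = k + 1 := le_antisymm h h'
        subst this; exact subset_rfl
  have hsep : ∀ n m, n < m → xn m ∉ Un n := by
    intro n m h
    have h1 : xn m ∈ (Sf (n + 1)).1 := hmono _ _ h (hxnS m)
    rw [hSfsucc n] at h1
    exact h1.2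
  -- Step 3: Urysohn functions
  have hury : ∀ n, ∃ F : C(K, ℝ), (∀ x ∉ Un n, F x = 0) ∧ F (xn n) = 1 ∧
      ∀ x, F x ∈ Set.Icc (0 : ℝ) 1 := by
    intro n
    obtain ⟨F, h0, h1, h01⟩ := exists_continuous_zero_one_of_isClosed
      (isClosed_compl_iff.mpr (hUopen n)) (isClosed_singleton (x := xn n))
      (by
        rw [Set.disjoint_left]
        intro a ha hb
        rw [Set.mem_singleton_iff] at hb
        subst hb
        exact ha (hxnU n))
    exact ⟨F, fun x hx => h0 hx, h1 rfl, h01⟩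
  choose F hF0 hF1 hF01 using hury
  -- Step 4: summability in C(K, ℝ)
  have hFnorm : ∀ n, ‖F n‖ ≤ 1 := by
    intro n
    rw [ContinuousMap.norm_le _ zero_le_one]
    intro x
    rw [Real.norm_eq_abs, abs_le]
    exact ⟨le_trans (by norm_num) (hF01 n x).1, (hF01 n x).2⟩
  have hgeo : Summable fun n : ℕ => ((3 : ℝ)⁻¹) ^ n :=
    summable_geometric_of_lt_one (by norm_num) (by norm_num)
  have hsumC : Summable fun n : ℕ => ((3 : ℝ)⁻¹) ^ n • F n := by
    refine Summable.of_norm_bounded hgeo ?_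
    intro n
    rw [norm_smul ((3 : ℝ)⁻¹ ^ n) (F n), Real.norm_eq_abs, abs_pow, abs_of_nonneg (by norm_num : (0:ℝ) ≤ 3⁻¹)]
    calc (3 : ℝ)⁻¹ ^ n * ‖F n‖ ≤ (3 : ℝ)⁻¹ ^ n * 1 :=
          mul_le_mul_of_nonneg_left (hFnorm n) (by positivity)
      _ = (3 : ℝ)⁻¹ ^ n := mul_one _
  set f : C(K, ℝ) := ∑' n, ((3 : ℝ)⁻¹) ^ n • F n with hf
  have hfeval : ∀ x : K, f x = ∑' n, ((3 : ℝ)⁻¹) ^ n * F n x := by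
    intro x
    have h1 := (ContinuousMap.evalCLM ℝ x).map_tsum hsumC
    have h2 : (ContinuousMap.evalCLM ℝ x) (∑' n, ((3 : ℝ)⁻¹) ^ n • F n) = f x := rfl
    rw [h2] at h1
    rw [h1]
    refine tsum_congr fun n => ?_
    show (((3 : ℝ)⁻¹) ^ n • F n) x = _
    rw [ContinuousMap.smul_apply, smul_eq_mul]
  have hsumpt : ∀ x : K, Summable fun n : ℕ => ((3 : ℝ)⁻¹) ^ n * F n x := by
    intro x
    refine Summable.of_nonneg_of_le (fun n => ?_) (fun n => ?_) hgeo
    · have := (hF01 n x).1; positivity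
    · calc (3 : ℝ)⁻¹ ^ n * F n x ≤ (3 : ℝ)⁻¹ ^ n * 1 :=
          mul_le_mul_of_nonneg_left (hF01 n x).2 (by positivity)
        _ = (3 : ℝ)⁻¹ ^ n := mul_one _
  -- lower bound: f (xn n) ≥ 3⁻¹ ^ n
  have hlow : ∀ n, ((3 : ℝ)⁻¹) ^ n ≤ f (xn n) := by
    intro n
    rw [hfeval]
    have := Summable.le_tsum (hsumpt (xn n)) n (fun k _ => by
      have := (hF01 k (xn n)).1; positivity)
    rwa [hF1 n, mul_one] at this
  -- upper bound: f (xn m) ≤ (3/2) * 3⁻¹ ^ m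
  have hhigh : ∀ m, f (xn m) ≤ (3 / 2) * ((3 : ℝ)⁻¹) ^ m := by
    intro m
    rw [hfeval]
    have hzero : ∀ k < m, ((3 : ℝ)⁻¹) ^ k * F k (xn m) = 0 := by
      intro k hk
      rw [hF0 k _ (hsep k m hk), mul_zero]
    have hsplit := Summable.sum_add_tsum_nat_add (f := fun n => ((3 : ℝ)⁻¹) ^ n * F n (xn m)) m
      (hsumpt (xn m))
    have hzsum : (∑ i ∈ Finset.range m, ((3 : ℝ)⁻¹) ^ i * F i (xn m)) = 0 :=
      Finset.sum_eq_zero fun i hi => hzero i (Finset.mem_range.mp hi)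
    rw [hzsum, zero_add] at hsplit
    rw [← hsplit]
    have htail : (∑' i : ℕ, ((3 : ℝ)⁻¹) ^ (i + m) * F (i + m) (xn m)) ≤
        ∑' i : ℕ, ((3 : ℝ)⁻¹) ^ (i + m) := by
      refine Summable.tsum_le_tsum (fun i => ?_) ((summable_nat_add_iff m).mpr (hsumpt (xn m)))
        ((summable_nat_add_iff m).mpr hgeo)
      calc (3 : ℝ)⁻¹ ^ (i + m) * F (i + m) (xn m) ≤ (3 : ℝ)⁻¹ ^ (i + m) * 1 :=
          mul_le_mul_of_nonneg_left (hF01 _ _).2 (by positivity)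
        _ = (3 : ℝ)⁻¹ ^ (i + m) := mul_one _
    refine htail.trans ?_
    have : (∑' i : ℕ, ((3 : ℝ)⁻¹) ^ (i + m)) = (∑' i : ℕ, ((3 : ℝ)⁻¹) ^ i) * (3 : ℝ)⁻¹ ^ m := by
      simp_rw [pow_add]
      exact tsum_mul_right
    rw [this, tsum_geometric_of_lt_one (by norm_num) (by norm_num)]
    norm_num
  -- f (xn n) is strictly decreasing in n, hence injective
  have hanti : StrictAnti fun n => f (xn n) := by
    refine strictAnti_nat_of_succ_lt fun n => ?_
    calc f (xn (n + 1)) ≤ (3 / 2) * ((3 : ℝ)⁻¹) ^ (n + 1) := hhigh (n + 1)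
      _ < ((3 : ℝ)⁻¹) ^ n := by
          rw [pow_succ]
          have : (0 : ℝ) < (3 : ℝ)⁻¹ ^ n := by positivity
          nlinarith
      _ ≤ f (xn n) := hlow n
  have hinf : (Set.range f).Infinite :=
    Set.infinite_of_injective_forall_mem (f := fun n => f (xn n)) hanti.injective
      (fun n => Set.mem_range_self _)
  refine ⟨⟨f, hinf⟩, ?_⟩
  -- Step 5: deduce a non-P-point
  by_contra h
  push_neg at h
  have h' : ∀ p : K, ∃ U : Set K, IsOpen U ∧ p ∈ U ∧ ∀ x ∈ U, f x = f p := by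
    intro p
    obtain ⟨U, hU, hpU, hconst⟩ := h p f
    exact ⟨U, hU, hpU, hconst⟩
  choose U hUo hpU hconst using h'
  obtain ⟨t, ht⟩ := isCompact_univ.elim_finite_subcover U hUo
    (fun x _ => Set.mem_iUnion.mpr ⟨x, hpU x⟩)
  have hsub : Set.range f ⊆ f '' (t : Set K) := by
    rintro _ ⟨x, rfl⟩
    obtain ⟨p, hpt', hxU⟩ := Set.mem_iUnion₂.mp (ht (Set.mem_univ x))
    exact ⟨p, hpt', (hconst p x hxU).symm⟩
  exact hinf (((t.finite_toSet).image f).subset hsub)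
end
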